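/- In the iterated construction A_r(ψ) (r ≥ 3) with state set Q_r = Q_{r-1} ∪ ((Q₂ \ {z₀}) × Q_{r-1}) and transition function δ_r as defined, if ψ is satisfiable under truth assignment τ, then the word c^{r-1}·v(τ)·c of length n + r synchronizes A_r(ψ) (sending every state to z₀). -/

import Mathlib

/-- The three-letter alphabet {a, b, c}. -/
inductive Letter3 where
  | a | b | c
deriving DecidableEq

/-- Extension of a transition function to words (left-to-right action). -/
def runW {Q A : Type*} (δ : Q → A → Q) : Q → List A → Q
  | q, [] => q
  | q, x :: w => runW δ (δ q x) w

/-- States of Berlinkov's automaton A(ψ) for a SAT instance with m clauses and n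
variables.  `q i j` encodes q_{i+1,j+1} (so `q ⟨m⟩ ⟨n⟩` is the state z₁),
`p i j` encodes p_{i+1,j+1}, and `z0` is the zero state. -/
inductive St (m n : ℕ) where
  | q : Fin (m + 1) → Fin (n + 1) → St m n
  | p : Fin (m + 1) → Fin (n + 1) → St m n
  | z0 : St m n
deriving DecidableEq

/-- The transition function of Berlinkov's automaton A(ψ).  `pos i j` means the
literal x_{j+1} occurs in clause c_{i+1}; `neg i j` means ¬x_{j+1} occurs there. -/
def St.delta {m n : ℕ} (pos neg : Fin m → Fin n → Bool) : St m n → Letter3 → St m n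
  | .q i j, .a =>
      if hj : (j : ℕ) < n then
        if hi : (i : ℕ) < m then
          if pos ⟨i, hi⟩ ⟨j, hj⟩ then .z0 else .q i ⟨(j : ℕ) + 1, by omega⟩
        else .q i ⟨(j : ℕ) + 1, by omega⟩
      else if (i : ℕ) < m then .z0 else .q i ⟨0, by omega⟩
  | .q i j, .b =>
      if hj : (j : ℕ) < n then
        if hi : (i : ℕ) < m then
          if neg ⟨i, hi⟩ ⟨j, hj⟩ then .z0 else .q i ⟨(j : ℕ) + 1, by omega⟩
        else .q i ⟨(j : ℕ) + 1, by omega⟩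
      else if (i : ℕ) < m then .z0 else .q i ⟨0, by omega⟩
  | .q i j, .c =>
      if (j : ℕ) < n then .q i ⟨0, by omega⟩
      else if (i : ℕ) < m then .q ⟨m, by omega⟩ ⟨0, by omega⟩ else .z0
  | .p i j, x =>
      if hj : (j : ℕ) < n then .p i ⟨(j : ℕ) + 1, by omega⟩
      else match x with
        | .c => .q i ⟨0, by omega⟩
        | _ => .z0
  | .z0, _ => .z0

/-- Clause c_{i+1} is satisfied by the truth assignment τ. -/
def clauseSat {m n : ℕ} (pos neg : Fin m → Fin n → Bool) (τ : Fin n → Bool) (i : Fin m) : Prop :=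
  ∃ j : Fin n, (pos i j = true ∧ τ j = true) ∨ (neg i j = true ∧ τ j = false)

/-- The word v(τ) ∈ {a,b}ⁿ encoding a truth assignment. -/
def encWord {n : ℕ} (τ : Fin n → Bool) : List Letter3 :=
  List.ofFn fun j : Fin n => if τ j then Letter3.a else Letter3.b

/-- Nonzero states of the base automaton A₂(ψ) = A(ψ). -/
abbrev St' (m n : ℕ) := {s : St m n // s ≠ St.z0}

/-- State sets of the iterated construction: `QIter m n k` is the state set of
A_{k+2}(ψ), so `QIter m n 0 = Q₂` and `Q_{r} = Q_{r-1} ⊕ (Q₂ \ {z₀}) × Q_{r-1}`. -/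
def QIter (m n : ℕ) : ℕ → Type
  | 0 => St m n
  | k + 1 => QIter m n k ⊕ (St' m n × QIter m n k)

/-- The zero state of A_{k+2}(ψ). -/
def z0Iter (m n : ℕ) : (k : ℕ) → QIter m n k
  | 0 => St.z0
  | k + 1 => Sum.inl (z0Iter m n k)

/-- The set {q_{i,n+1} : i ≤ m} ∪ {q_{m+1,j} : 2 ≤ j ≤ n} ∪ {z₁} of states whose
pairs drop to the second component when mapped to q_{m+1,1}. -/
def dropSet {m n : ℕ} : St m n → Prop
  | St.q i j => ((i : ℕ) < m ∧ (j : ℕ) = n) ∨ ((i : ℕ) = m ∧ 1 ≤ (j : ℕ))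
  | _ => False

instance {m n : ℕ} : DecidablePred (dropSet (m := m) (n := n)) := by
  intro s
  cases s <;> simp only [dropSet] <;> infer_instance

/-- The transition function δ_r of the iterated construction A_{k+2}(ψ). -/
def deltaIter {m n : ℕ} (pos neg : Fin m → Fin n → Bool) :
    (k : ℕ) → QIter m n k → Letter3 → QIter m n k
  | 0, s, d => St.delta pos neg s d
  | k + 1, Sum.inl s, d => Sum.inl (deltaIter pos neg k s d)
  | k + 1, Sum.inr (q', q''), d =>
      if ht : St.delta pos neg q'.val d = St.z0 then
        Sum.inl (z0Iter m n k)
      else if St.delta pos neg q'.val d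
            = St.q ⟨m, Nat.lt_succ_self m⟩ ⟨0, Nat.succ_pos n⟩ ∧ dropSet q'.val then
        Sum.inl q''
      else
        Sum.inr (⟨St.delta pos neg q'.val d, ht⟩, q'')

/-!
The base automaton kills every state `δ₂(s, c)` along `c^t·v(τ)·c`: a state `q_{i,1}` is fixed
by `c` and then reads `v(τ)`, which dies at a literal satisfying clause `i` (or, for `i = m+1`,
reaches `z₁` and dies on the final `c`); a state `p_{i,j}` with `j ≥ 2` advances along the `c`'s,
and either falls into `q_{i,1}` or dies while reading `v(τ)`. None of these runs passes through a
transition that makes a pair `(q', q'')` drop to `q''`, so in `A_r(ψ)` a pair whose first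
component is not dropped by the first `c` follows the base run to `z₀`. A pair that is dropped
lands in `Q_{r-1}` with `c^{r-2}·v(τ)·c` still to read, which is the induction hypothesis.
-/

theorem length_encWord {n : ℕ} (τ : Fin n → Bool) : (encWord τ).length = n := by
  simp [encWord]

theorem ne_c_of_mem_encWord {n : ℕ} (τ : Fin n → Bool) : ∀ d ∈ encWord τ, d ≠ .c := by
  simp only [encWord, List.mem_ofFn, forall_exists_index]
  rintro d j rfl
  split <;> simp

theorem encWord_drop_eq_cons {n : ℕ} (τ : Fin n → Bool) {j : ℕ} (hj : j < n) :
    (encWord τ).drop j = (if τ ⟨j, hj⟩ then .a else .b) :: (encWord τ).drop (j + 1) := by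
  rw [List.drop_eq_getElem_cons (by simpa [length_encWord] using hj)]
  simp [encWord]

theorem runW_cons {Q A : Type*} (δ : Q → A → Q) (q : Q) (a : A) (w : List A) :
    runW δ q (a :: w) = runW δ (δ q a) w :=
  rfl

section Base

variable {m n : ℕ} (pos neg : Fin m → Fin n → Bool)

namespace St

theorem delta_q_c_of_lt (i : Fin (m + 1)) (j : Fin (n + 1)) (hj : (j : ℕ) < n) :
    St.delta pos neg (.q i j) .c = .q i 0 := by
  simp [St.delta, hj]

theorem delta_q_last_of_ne_c (j : Fin (n + 1)) (hj : (j : ℕ) < n) {d : Letter3}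
    (hd : d ≠ .c) :
    St.delta pos neg (.q (Fin.last m) j) d = .q (Fin.last m) ⟨j + 1, by omega⟩ := by
  cases d <;> simp_all [St.delta, Fin.last]

theorem delta_q_last_c (j : Fin (n + 1)) (hj : (j : ℕ) = n) :
    St.delta pos neg (.q (Fin.last m) j) .c = .z0 := by
  simp [St.delta, hj, Fin.last]

theorem delta_q_encLetter (τ : Fin n → Bool) (i : Fin (m + 1)) (hi : (i : ℕ) < m)
    (j : Fin (n + 1)) (hj : (j : ℕ) < n) :
    St.delta pos neg (.q i j) (if τ ⟨j, hj⟩ then .a else .b) =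
      if (pos ⟨i, hi⟩ ⟨j, hj⟩ = true ∧ τ ⟨j, hj⟩ = true) ∨
          (neg ⟨i, hi⟩ ⟨j, hj⟩ = true ∧ τ ⟨j, hj⟩ = false)
        then .z0 else .q i ⟨j + 1, by omega⟩ := by
  cases τ ⟨j, hj⟩ <;> simp [St.delta, hi, hj]

theorem delta_p_of_lt (i : Fin (m + 1)) (j : Fin (n + 1)) (hj : (j : ℕ) < n) (d : Letter3) :
    St.delta pos neg (.p i j) d = .p i ⟨j + 1, by omega⟩ := by
  simp [St.delta, hj]

theorem delta_p_c (i : Fin (m + 1)) (j : Fin (n + 1)) (hj : (j : ℕ) = n) :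
    St.delta pos neg (.p i j) .c = .q i 0 := by
  simp [St.delta, hj]

theorem delta_p_of_ne_c (i : Fin (m + 1)) (j : Fin (n + 1)) (hj : (j : ℕ) = n) {d : Letter3}
    (hd : d ≠ .c) : St.delta pos neg (.p i j) d = .z0 := by
  cases d <;> simp_all [St.delta]

/-- The transitions on which `δ_r` sends a pair `(q', q'')` to its second component. -/
def IsDropStep (s : St m n) (d : Letter3) : Prop :=
  St.delta pos neg s d = St.q ⟨m, Nat.lt_succ_self m⟩ ⟨0, Nat.succ_pos n⟩ ∧ dropSet s

def KillsWithoutDrop : St m n → List Letter3 → Prop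
  | s, [] => s = .z0
  | s, d :: w => ¬IsDropStep pos neg s d ∧ KillsWithoutDrop (St.delta pos neg s d) w

variable {pos neg}

theorem killsWithoutDrop_z0 (w : List Letter3) : KillsWithoutDrop pos neg .z0 w := by
  induction w with
  | nil => rfl
  | cons d w ih => exact ⟨fun h => h.2, ih⟩

theorem KillsWithoutDrop.runW_eq {s : St m n} {w : List Letter3}
    (h : KillsWithoutDrop pos neg s w) : runW (St.delta pos neg) s w = .z0 := by
  induction w generalizing s with
  | nil => exact h
  | cons d w ih => exact ih h.2

theorem KillsWithoutDrop.cons_of_ne {s t : St m n} {d : Letter3} {w : List Letter3}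
    (hs : St.delta pos neg s d = t) (ht : t ≠ .q (Fin.last m) 0)
    (h : KillsWithoutDrop pos neg t w) : KillsWithoutDrop pos neg s (d :: w) :=
  ⟨fun hd => ht (hs ▸ hd.1), hs ▸ h⟩

theorem KillsWithoutDrop.cons_of_not_dropSet {s t : St m n} {d : Letter3} {w : List Letter3}
    (hs : St.delta pos neg s d = t) (hds : ¬dropSet s)
    (h : KillsWithoutDrop pos neg t w) : KillsWithoutDrop pos neg s (d :: w) :=
  ⟨fun hd => hds hd.2, hs ▸ h⟩

theorem not_dropSet_q_zero (hn : 0 < n) (i : Fin (m + 1)) : ¬dropSet (St.q (n := n) i 0) := by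
  simp only [dropSet, Fin.val_zero]
  omega

theorem killsWithoutDrop_q_last {w : List Letter3} (hw : ∀ d ∈ w, d ≠ .c) (j : Fin (n + 1))
    (hj : (j : ℕ) + w.length = n) :
    KillsWithoutDrop pos neg (.q (Fin.last m) j) (w ++ [.c]) := by
  induction w generalizing j with
  | nil =>
    exact .cons_of_ne (delta_q_last_c pos neg j (by simpa using hj)) (by simp)
      (killsWithoutDrop_z0 [])
  | cons d w ih =>
    simp only [List.length_cons] at hj
    exact .cons_of_ne (delta_q_last_of_ne_c pos neg j (by omega) (hw d (by simp)))
      (by simp only [ne_eq, St.q.injEq, Fin.ext_iff, Fin.val_zero]; omega)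
      (ih (fun d' hd' => hw d' (by simp [hd'])) _ (by dsimp only; omega))

theorem killsWithoutDrop_q_of_clause (τ : Fin n → Bool) (i : Fin (m + 1)) (hi : (i : ℕ) < m)
    (j₀ : Fin n)
    (hj₀ : (pos ⟨i, hi⟩ j₀ = true ∧ τ j₀ = true) ∨ (neg ⟨i, hi⟩ j₀ = true ∧ τ j₀ = false))
    (j : Fin (n + 1)) (hj : (j : ℕ) ≤ j₀) :
    KillsWithoutDrop pos neg (.q i j) ((encWord τ).drop j ++ [.c]) := by
  have hjn : (j : ℕ) < n := by omega
  rw [encWord_drop_eq_cons τ hjn, List.cons_append]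
  by_cases hsat : (pos ⟨i, hi⟩ ⟨j, hjn⟩ = true ∧ τ ⟨j, hjn⟩ = true) ∨
      (neg ⟨i, hi⟩ ⟨j, hjn⟩ = true ∧ τ ⟨j, hjn⟩ = false)
  · exact .cons_of_ne ((delta_q_encLetter pos neg τ i hi j hjn).trans (if_pos hsat)) (by simp)
      (killsWithoutDrop_z0 _)
  · have hlt : (j : ℕ) < j₀ := by
      refine lt_of_le_of_ne hj fun h => hsat ?_
      rwa [show (⟨j, hjn⟩ : Fin n) = j₀ from Fin.ext h]
    exact .cons_of_ne ((delta_q_encLetter pos neg τ i hi j hjn).trans (if_neg hsat))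
      (by simp only [ne_eq, St.q.injEq, Fin.ext_iff, Fin.val_last]; omega)
      (killsWithoutDrop_q_of_clause τ i hi j₀ hj₀ ⟨j + 1, by omega⟩ (by dsimp only; omega))
termination_by (j₀ : ℕ) - j

theorem killsWithoutDrop_p {w : List Letter3} (hw : ∀ d ∈ w, d ≠ .c) (i : Fin (m + 1))
    (j : Fin (n + 1)) (hj : n < j + w.length) :
    KillsWithoutDrop pos neg (.p i j) (w ++ [.c]) := by
  induction w generalizing j with
  | nil => simp at hj; omega
  | cons d w ih =>
    simp only [List.length_cons] at hj
    by_cases hjn : (j : ℕ) < n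
    · exact .cons_of_ne (delta_p_of_lt pos neg i j hjn d) (by simp)
        (ih (fun d' hd' => hw d' (by simp [hd'])) _ (by dsimp only; omega))
    · exact .cons_of_ne (delta_p_of_ne_c pos neg i j (by omega) (hw d (by simp))) (by simp)
        (killsWithoutDrop_z0 _)

section Satisfiable

variable (τ : Fin n → Bool) (hτ : ∀ i : Fin m, clauseSat pos neg τ i)
include hτ

theorem killsWithoutDrop_q_zero_encWord (i : Fin (m + 1)) :
    KillsWithoutDrop pos neg (.q i 0) (encWord τ ++ [.c]) := by
  by_cases hi : (i : ℕ) < m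
  · obtain ⟨j₀, hj₀⟩ := hτ ⟨i, hi⟩
    simpa using killsWithoutDrop_q_of_clause τ i hi j₀ hj₀ 0 (by simp)
  · obtain rfl : i = Fin.last m := Fin.ext (by simp only [Fin.val_last]; omega)
    exact killsWithoutDrop_q_last (ne_c_of_mem_encWord τ) 0 (by simp [length_encWord])

theorem killsWithoutDrop_q_zero (hn : 0 < n) (i : Fin (m + 1)) (t : ℕ) :
    KillsWithoutDrop pos neg (.q i 0) (List.replicate t .c ++ encWord τ ++ [.c]) := by
  induction t with
  | zero => simpa using killsWithoutDrop_q_zero_encWord τ hτ i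
  | succ t ih =>
    rw [List.replicate_succ, List.cons_append, List.cons_append]
    exact .cons_of_not_dropSet (delta_q_c_of_lt pos neg i 0 (by simpa))
      (not_dropSet_q_zero hn i) ih

theorem killsWithoutDrop_p_of_pos (hn : 0 < n) (i : Fin (m + 1)) (t : ℕ) (j : Fin (n + 1))
    (hj : 0 < (j : ℕ)) :
    KillsWithoutDrop pos neg (.p i j) (List.replicate t .c ++ encWord τ ++ [.c]) := by
  induction t generalizing j with
  | zero =>
    simpa using killsWithoutDrop_p (ne_c_of_mem_encWord τ) i j (by rw [length_encWord]; omega)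
  | succ t ih =>
    rw [List.replicate_succ, List.cons_append, List.cons_append]
    by_cases hjn : (j : ℕ) < n
    · exact .cons_of_ne (delta_p_of_lt pos neg i j hjn .c) (by simp) (ih _ (by dsimp only; omega))
    · exact .cons_of_not_dropSet (delta_p_c pos neg i j (by omega)) (by simp [dropSet])
        (killsWithoutDrop_q_zero τ hτ hn i t)

theorem killsWithoutDrop_delta_c (hn : 0 < n) (s : St m n) (t : ℕ) :
    KillsWithoutDrop pos neg (St.delta pos neg s .c)
      (List.replicate t .c ++ encWord τ ++ [.c]) := by
  cases s with
  | q i j =>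
    by_cases hj : (j : ℕ) < n
    · rw [delta_q_c_of_lt pos neg i j hj]
      exact killsWithoutDrop_q_zero τ hτ hn i t
    by_cases hi : (i : ℕ) < m
    · rw [show St.delta pos neg (.q i j) .c = .q (Fin.last m) 0 by simp [St.delta, hj, hi]; rfl]
      exact killsWithoutDrop_q_zero τ hτ hn _ t
    · rw [show St.delta pos neg (.q i j) .c = .z0 by simp [St.delta, hj, hi]]
      exact killsWithoutDrop_z0 _
  | p i j =>
    by_cases hj : (j : ℕ) < n
    · rw [delta_p_of_lt pos neg i j hj]
      exact killsWithoutDrop_p_of_pos τ hτ hn i t _ (by dsimp only; omega)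
    · rw [delta_p_c pos neg i j (by omega)]
      exact killsWithoutDrop_q_zero τ hτ hn i t
  | z0 => exact killsWithoutDrop_z0 _

end Satisfiable

end St

end Base

section Iter

variable {m n : ℕ} (pos neg : Fin m → Fin n → Bool)

theorem deltaIter_z0Iter (k : ℕ) (d : Letter3) :
    deltaIter pos neg k (z0Iter m n k) d = z0Iter m n k := by
  induction k with
  | zero => rfl
  | succ k ih => exact congrArg Sum.inl ih

theorem runW_deltaIter_inl (k : ℕ) (s : QIter m n k) (w : List Letter3) :
    runW (deltaIter pos neg (k + 1)) (.inl s) w = .inl (runW (deltaIter pos neg k) s w) := by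
  induction w generalizing s with
  | nil => rfl
  | cons d w ih => exact ih _

/-- The state `(s, q'')` of `A_{k+3}(ψ)`, read as `z₀` when `s = z₀`. -/
def pairOrZero {k : ℕ} (q'' : QIter m n k) (s : St m n) : QIter m n (k + 1) :=
  if h : s = .z0 then z0Iter m n (k + 1) else .inr (⟨s, h⟩, q'')

theorem pairOrZero_z0 {k : ℕ} (q'' : QIter m n k) : pairOrZero q'' .z0 = z0Iter m n (k + 1) :=
  dif_pos rfl

theorem pairOrZero_of_ne {k : ℕ} (q'' : QIter m n k) {s : St m n} (hs : s ≠ .z0) :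
    pairOrZero q'' s = .inr (⟨s, hs⟩, q'') :=
  dif_neg hs

variable {pos neg}

theorem deltaIter_inr_of_eq_z0 {k : ℕ} (q' : St' m n) (q'' : QIter m n k) {d : Letter3}
    (hz : St.delta pos neg q'.val d = .z0) :
    deltaIter pos neg (k + 1) (.inr (q', q'')) d = z0Iter m n (k + 1) :=
  dif_pos hz

theorem deltaIter_inr_of_isDropStep {k : ℕ} (q' : St' m n) (q'' : QIter m n k) {d : Letter3}
    (hz : St.delta pos neg q'.val d ≠ .z0) (h : St.IsDropStep pos neg q'.val d) :
    deltaIter pos neg (k + 1) (.inr (q', q'')) d = .inl q'' :=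
  (dif_neg hz).trans (if_pos h)

theorem deltaIter_inr_of_not_isDropStep {k : ℕ} (q' : St' m n) (q'' : QIter m n k)
    {d : Letter3} (hz : St.delta pos neg q'.val d ≠ .z0) (h : ¬St.IsDropStep pos neg q'.val d) :
    deltaIter pos neg (k + 1) (.inr (q', q'')) d = .inr (⟨_, hz⟩, q'') :=
  (dif_neg hz).trans (if_neg h)

theorem deltaIter_pairOrZero {k : ℕ} (q'' : QIter m n k) {s : St m n} {d : Letter3}
    (h : ¬St.IsDropStep pos neg s d) :
    deltaIter pos neg (k + 1) (pairOrZero q'' s) d = pairOrZero q'' (St.delta pos neg s d) := by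
  by_cases hs : s = .z0
  · subst hs
    exact deltaIter_z0Iter pos neg (k + 1) d
  rw [pairOrZero_of_ne q'' hs]
  by_cases hz : St.delta pos neg s d = .z0
  · rw [hz, pairOrZero_z0]
    exact deltaIter_inr_of_eq_z0 ⟨s, hs⟩ q'' hz
  · rw [pairOrZero_of_ne q'' hz]
    exact deltaIter_inr_of_not_isDropStep ⟨s, hs⟩ q'' hz h

theorem St.KillsWithoutDrop.runW_pairOrZero {k : ℕ} (q'' : QIter m n k) {s : St m n}
    {w : List Letter3} (h : St.KillsWithoutDrop pos neg s w) :
    runW (deltaIter pos neg (k + 1)) (pairOrZero q'' s) w = z0Iter m n (k + 1) := by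
  induction w generalizing s with
  | nil =>
    subst h
    rfl
  | cons d w ih =>
    rw [runW_cons, deltaIter_pairOrZero q'' h.1]
    exact ih h.2

theorem runW_deltaIter_eq_z0Iter (hn : 0 < n) (τ : Fin n → Bool)
    (hτ : ∀ i : Fin m, clauseSat pos neg τ i) (k : ℕ) (s : QIter m n k) :
    runW (deltaIter pos neg k) s (List.replicate (k + 1) .c ++ encWord τ ++ [.c])
      = z0Iter m n k := by
  induction k with
  | zero => exact (St.killsWithoutDrop_delta_c τ hτ hn s 0).runW_eq
  | succ k ih =>
    rw [List.replicate_succ, List.cons_append, List.cons_append, runW_cons]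
    rcases s with s | ⟨q', q''⟩
    · exact (runW_deltaIter_inl pos neg k _ _).trans (congrArg Sum.inl (ih _))
    by_cases hdrop : St.IsDropStep pos neg q'.val .c
    · have hne : St.delta pos neg q'.val .c ≠ .z0 := by simp [hdrop.1]
      rw [deltaIter_inr_of_isDropStep q' q'' hne hdrop, runW_deltaIter_inl, ih]
      rfl
    · rw [← pairOrZero_of_ne q'' q'.2, deltaIter_pairOrZero q'' hdrop]
      exact (St.killsWithoutDrop_delta_c τ hτ hn _ (k + 1)).runW_pairOrZero q''

end Iter

/-- If ψ is satisfiable under τ, the word c^{r-1}·v(τ)·c of length n+r synchronizes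
the iterated automaton A_r(ψ) (here r = k+3 ≥ 3, and A_r has state set `QIter m n (k+1)`),
sending every state to z₀. -/
theorem iterated_sat_sync
    {m n : ℕ} (hn : 2 < n) (pos neg : Fin m → Fin n → Bool)
    (τ : Fin n → Bool) (hτ : ∀ i : Fin m, clauseSat pos neg τ i) (k : ℕ) :
    (List.replicate (k + 2) Letter3.c ++ encWord τ ++ [Letter3.c]).length = n + (k + 3) ∧
      ∀ s : QIter m n (k + 1),
        runW (deltaIter pos neg (k + 1)) s
            (List.replicate (k + 2) Letter3.c ++ encWord τ ++ [Letter3.c])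
          = z0Iter m n (k + 1) := by
  refine ⟨?_, runW_deltaIter_eq_z0Iter (by omega) τ hτ (k + 1)⟩
  simp only [List.length_append, List.length_replicate, length_encWord, List.length_singleton]
  omega
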